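/- For fixed y ∈ ℝ₊ⁿ and θ₁,…,θₙ > 0 with θ₀ = ∑θ_i > 2, the potential kernel u(x,y) given by the explicit series satisfies u(x,y) ≤ C (∑_i x_i)^{1−θ₀/2} for all x with ∑_i x_i sufficiently large, where C depends only on y and θ. -/

import Mathlib

open Finset

/-- The finite set of tuples `(k₁,…,kₙ)` of nonnegative integers with
`k₁ + ⋯ + kₙ = m`. -/
def multiIdx (n m : ℕ) : Finset (Fin n → ℕ) :=
  (Fintype.piFinset fun _ : Fin n => Finset.range (m + 1)).filter fun k => ∑ i, k i = m

/-- The explicit series for the potential kernel of `n` independent BESQ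
processes. -/
noncomputable def potKernel {n : ℕ} (θ : Fin n → ℝ) (x y : Fin n → ℝ) : ℝ :=
  (1 / 2) * ((∑ i, (x i + y i)) ^ ((1 : ℝ) - (∑ i, θ i) / 2))
    * (∏ i, y i ^ (θ i / 2 - 1)) *
    ∑' m : ℕ,
      Real.Gamma ((∑ i, θ i) / 2 - 1 + 2 * m)
        * ((∑ i, (x i + y i)) ^ (-(2 : ℝ) * m) / m.factorial) *
        ∑ k ∈ multiIdx n m,
          (Nat.multinomial Finset.univ k : ℝ) *
            ∏ i, (x i * y i) ^ (k i) / Real.Gamma (θ i / 2 + k i)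

/-!
With `a = θ₀/2 - 1` and `cᵢ = min (θᵢ/2) 1`, the recursion `Γ(s+1) = s Γ(s)` gives
`cᵢ^k k! Γ(θᵢ/2) ≤ Γ(θᵢ/2 + k)` and `Γ(a + 2m) ≤ (4 max(a,1)²)^m (m!)² Γ(a)`.
Since `∏ kᵢ! = m! / C(m;k)` and `∑ₖ C(m;k)² ≤ (∑ₖ C(m;k))² = n^{2m}`, the `m`-th term of the series
is at most `Γ(a) / ∏ Γ(θᵢ/2) · (4 max(a,1)² n² ∑ xᵢyᵢ/cᵢ / S²)^m`, and `∑ xᵢyᵢ/cᵢ ≤ S ∑ yᵢ/cᵢ`.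
Once `S` is large the ratio is at most `1/2`, so the series is bounded by `2 Γ(a) / ∏ Γ(θᵢ/2)`,
and `S^{1-θ₀/2} ≤ (∑ xᵢ)^{1-θ₀/2}` because the exponent is negative.
-/

open Real
open scoped Nat

theorem le_Gamma_add_nat {s : ℝ} (hs : 0 < s) (k : ℕ) :
    min s 1 ^ k * k ! * Gamma s ≤ Gamma (s + k) := by
  induction k with
  | zero => simp
  | succ k ih =>
    have hstep : min s 1 * (k + 1) ≤ s + k := by
      nlinarith [min_le_left s 1, min_le_right s 1, (k.cast_nonneg : (0 : ℝ) ≤ k)]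
    rw [Nat.cast_succ, ← add_assoc, Gamma_add_one (by positivity), Nat.factorial_succ]
    push_cast
    calc min s 1 ^ (k + 1) * ((k + 1) * k !) * Gamma s
        = min s 1 * (k + 1) * (min s 1 ^ k * k ! * Gamma s) := by ring
      _ ≤ (s + k) * Gamma (s + k) := by gcongr

theorem Gamma_add_nat_le {s : ℝ} (hs : 0 < s) (k : ℕ) :
    Gamma (s + k) ≤ max s 1 ^ k * k ! * Gamma s := by
  induction k with
  | zero => simp
  | succ k ih =>
    have hstep : s + k ≤ max s 1 * (k + 1) := by
      nlinarith [le_max_left s 1, le_max_right s 1, (k.cast_nonneg : (0 : ℝ) ≤ k)]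
    rw [Nat.cast_succ, ← add_assoc, Gamma_add_one (by positivity), Nat.factorial_succ]
    push_cast
    calc (s + k) * Gamma (s + k)
        ≤ max s 1 * (k + 1) * (max s 1 ^ k * k ! * Gamma s) := by gcongr
      _ = max s 1 ^ (k + 1) * ((k + 1) * k !) * Gamma s := by ring

theorem Nat.factorial_two_mul_le_four_pow_mul_sq (m : ℕ) : (2 * m)! ≤ 4 ^ m * m ! ^ 2 := by
  rw [← Nat.choose_mul_factorial_mul_factorial (by omega : m ≤ 2 * m),
    show 2 * m - m = m by omega, ← Nat.centralBinom_eq_two_mul_choose, mul_assoc, ← sq]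
  gcongr
  exact Nat.centralBinom_le_four_pow m

theorem Gamma_add_two_mul_nat_le {a : ℝ} (ha : 0 < a) (m : ℕ) :
    Gamma (a + 2 * m) ≤ (4 * max a 1 ^ 2) ^ m * (m ! : ℝ) ^ 2 * Gamma a := by
  have hfact : ((2 * m)! : ℝ) ≤ 4 ^ m * (m ! : ℝ) ^ 2 := by
    exact_mod_cast Nat.factorial_two_mul_le_four_pow_mul_sq m
  calc Gamma (a + 2 * m) ≤ max a 1 ^ (2 * m) * (2 * m)! * Gamma a := by
        exact_mod_cast Gamma_add_nat_le ha (2 * m)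
    _ ≤ max a 1 ^ (2 * m) * (4 ^ m * (m ! : ℝ) ^ 2) * Gamma a := by gcongr
    _ = (4 * max a 1 ^ 2) ^ m * (m ! : ℝ) ^ 2 * Gamma a := by ring

theorem tsum_le_two_mul_of_le_geometric {f : ℕ → ℝ} {K : ℝ} (hf : ∀ m, 0 ≤ f m)
    (hfK : ∀ m, f m ≤ K * (1 / 2) ^ m) : ∑' m, f m ≤ 2 * K := by
  have hgeom : Summable fun m : ℕ => K * (1 / 2 : ℝ) ^ m := summable_geometric_two.mul_left K
  calc ∑' m, f m ≤ ∑' m : ℕ, K * (1 / 2 : ℝ) ^ m :=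
        (hgeom.of_nonneg_of_le hf hfK).tsum_le_tsum hfK hgeom
    _ = 2 * K := by rw [tsum_mul_left, tsum_geometric_two, mul_comm]

theorem sum_mul_le_sum_mul_sum {ι : Type*} (s : Finset ι) {f g : ι → ℝ}
    (hf : ∀ i ∈ s, 0 ≤ f i) (hg : ∀ i ∈ s, 0 ≤ g i) :
    ∑ i ∈ s, f i * g i ≤ (∑ i ∈ s, f i) * ∑ i ∈ s, g i := by
  rw [sum_mul_sum]
  exact sum_le_sum fun i hi =>
    single_le_sum (f := fun j => f i * g j) (fun j hj => mul_nonneg (hf i hi) (hg j hj)) hi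

section Multinomial

variable {n : ℕ}

theorem multiIdx_eq_piAntidiag (n m : ℕ) : multiIdx n m = piAntidiag univ m := by
  ext k
  simp only [multiIdx, mem_filter, Fintype.mem_piFinset, mem_range, mem_piAntidiag, mem_univ,
    implies_true, and_true, and_iff_right_iff_imp]
  intro hk i
  exact Nat.lt_succ_of_le (hk ▸ single_le_sum (fun j _ => Nat.zero_le (k j)) (mem_univ i))

theorem sum_multinomial_multiIdx (n m : ℕ) :
    ∑ k ∈ multiIdx n m, (Nat.multinomial univ k : ℝ) = (n : ℝ) ^ m := by
  simpa [multiIdx_eq_piAntidiag] using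
    (sum_pow_eq_sum_piAntidiag univ (fun _ : Fin n => (1 : ℝ)) m).symm

theorem factorial_eq_multinomial_mul_prod_factorial {m : ℕ} {k : Fin n → ℕ}
    (hk : k ∈ multiIdx n m) : (m ! : ℝ) = Nat.multinomial univ k * ∏ i, ((k i)! : ℝ) := by
  have hsum : ∑ i, k i = m := (mem_filter.mp hk).2
  rw [← hsum]
  exact_mod_cast ((mul_comm _ _).trans (Nat.multinomial_spec univ k)).symm

end Multinomial

theorem pow_div_Gamma_add_nat_le {s z : ℝ} (hs : 0 < s) (hz : 0 ≤ z) (k : ℕ) :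
    z ^ k / Gamma (s + k) ≤ (z / min s 1) ^ k / (k ! * Gamma s) := by
  have hmin : 0 < min s 1 := lt_min hs one_pos
  have hGamma : 0 < Gamma s := Gamma_pos_of_pos hs
  rw [div_pow, div_div, ← mul_assoc]
  exact div_le_div_of_nonneg_left (by positivity) (by positivity) (le_Gamma_add_nat hs k)

section GammaMultinomialSum

variable {n : ℕ} {s z : Fin n → ℝ}

noncomputable def gammaMultinomialSum (s z : Fin n → ℝ) (m : ℕ) : ℝ :=
  ∑ k ∈ multiIdx n m, (Nat.multinomial univ k : ℝ) * ∏ i, z i ^ k i / Gamma (s i + k i)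

theorem gammaMultinomialSum_nonneg (hs : ∀ i, 0 < s i) (hz : ∀ i, 0 ≤ z i) (m : ℕ) :
    0 ≤ gammaMultinomialSum s z m := by
  refine sum_nonneg fun k _ => mul_nonneg (Nat.cast_nonneg _) (prod_nonneg fun i _ => ?_)
  exact div_nonneg (pow_nonneg (hz i) _) (Gamma_pos_of_pos (by positivity [hs i])).le

theorem prod_pow_div_Gamma_add_le (hs : ∀ i, 0 < s i) (hz : ∀ i, 0 ≤ z i) (k : Fin n → ℕ) :
    ∏ i, z i ^ k i / Gamma (s i + k i) ≤
      (∑ i, z i / min (s i) 1) ^ (∑ i, k i) / ((∏ i, ((k i)! : ℝ)) * ∏ i, Gamma (s i)) := by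
  have hterm_nonneg : ∀ i, 0 ≤ z i / min (s i) 1 := fun i =>
    div_nonneg (hz i) (le_min (hs i).le zero_le_one)
  calc ∏ i, z i ^ k i / Gamma (s i + k i)
      ≤ ∏ i, (∑ j, z j / min (s j) 1) ^ k i / ((k i)! * Gamma (s i)) := by
        refine prod_le_prod (fun i _ => div_nonneg (pow_nonneg (hz i) _)
          (Gamma_pos_of_pos (by positivity [hs i])).le) fun i _ => ?_
        refine (pow_div_Gamma_add_nat_le (hs i) (hz i) (k i)).trans ?_
        have := Gamma_pos_of_pos (hs i)
        gcongr
        exacts [hterm_nonneg i, single_le_sum (fun j _ => hterm_nonneg j) (mem_univ i)]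
    _ = _ := by rw [prod_div_distrib, prod_pow_eq_pow_sum, prod_mul_distrib]

theorem gammaMultinomialSum_le (hs : ∀ i, 0 < s i) (hz : ∀ i, 0 ≤ z i) (m : ℕ) :
    gammaMultinomialSum s z m ≤
      (n ^ 2 * ∑ i, z i / min (s i) 1) ^ m / (m ! * ∏ i, Gamma (s i)) := by
  set Z := ∑ i, z i / min (s i) 1
  set G := ∏ i, Gamma (s i)
  have hG : 0 < G := prod_pos fun i _ => Gamma_pos_of_pos (hs i)
  have hZ : 0 ≤ Z := sum_nonneg fun i _ => div_nonneg (hz i) (le_min (hs i).le zero_le_one)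
  calc gammaMultinomialSum s z m
      ≤ ∑ k ∈ multiIdx n m,
          (Nat.multinomial univ k : ℝ) * (Z ^ m / ((∏ i, ((k i)! : ℝ)) * G)) := by
        refine sum_le_sum fun k hk => mul_le_mul_of_nonneg_left ?_ (Nat.cast_nonneg _)
        simpa [(mem_filter.mp hk).2] using prod_pow_div_Gamma_add_le hs hz k
    _ = ∑ k ∈ multiIdx n m, (Nat.multinomial univ k : ℝ) ^ 2 * (Z ^ m / (m ! * G)) := by
        refine sum_congr rfl fun k hk => ?_
        have : (Nat.multinomial univ k : ℝ) ≠ 0 := by positivity [Nat.multinomial_pos univ k]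
        rw [factorial_eq_multinomial_mul_prod_factorial hk]
        field_simp
    _ ≤ (∑ k ∈ multiIdx n m, (Nat.multinomial univ k : ℝ)) ^ 2 * (Z ^ m / (m ! * G)) := by
        rw [← sum_mul]
        gcongr
        exact sum_sq_le_sq_sum_of_nonneg fun k _ => Nat.cast_nonneg _
    _ = (n ^ 2 * Z) ^ m / (m ! * G) := by rw [sum_multinomial_multiIdx]; ring

end GammaMultinomialSum

theorem Gamma_mul_rpow_mul_gammaMultinomialSum_le {n : ℕ} {s z : Fin n → ℝ} {a S : ℝ}
    (ha : 0 < a) (hS : 0 < S) (hs : ∀ i, 0 < s i) (hz : ∀ i, 0 ≤ z i) (m : ℕ) :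
    Gamma (a + 2 * m) * (S ^ (-(2 : ℝ) * m) / m !) * gammaMultinomialSum s z m ≤
      Gamma a / (∏ i, Gamma (s i)) *
        (4 * max a 1 ^ 2 * n ^ 2 * (∑ i, z i / min (s i) 1) / S ^ 2) ^ m := by
  have hrpow : S ^ (-(2 : ℝ) * m) = ((S ^ 2) ^ m)⁻¹ := by
    rw [neg_mul, rpow_neg hS.le, ← pow_mul, ← rpow_natCast]
    push_cast
    ring_nf
  have hG : 0 < ∏ i, Gamma (s i) := prod_pos fun i _ => Gamma_pos_of_pos (hs i)
  have := Gamma_pos_of_pos ha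
  have := gammaMultinomialSum_nonneg hs hz m
  calc Gamma (a + 2 * m) * (S ^ (-(2 : ℝ) * m) / m !) * gammaMultinomialSum s z m
      ≤ (4 * max a 1 ^ 2) ^ m * (m ! : ℝ) ^ 2 * Gamma a * (((S ^ 2) ^ m)⁻¹ / m !) *
          ((n ^ 2 * ∑ i, z i / min (s i) 1) ^ m / (m ! * ∏ i, Gamma (s i))) := by
        rw [hrpow]
        gcongr
        exacts [Gamma_add_two_mul_nat_le ha m, gammaMultinomialSum_le hs hz m]
    _ = _ := by
        rw [div_pow]
        field_simp
        ring

theorem potKernel_le {n : ℕ} {θ x y : Fin n → ℝ} (hθ : ∀ i, 0 < θ i) (hθ0 : 2 < ∑ i, θ i)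
    (hx : ∀ i, 0 ≤ x i) (hy : ∀ i, 0 ≤ y i) (hS : 0 < ∑ i, (x i + y i))
    (hsmall : 4 * max ((∑ i, θ i) / 2 - 1) 1 ^ 2 * n ^ 2 * ∑ i, x i * y i / min (θ i / 2) 1 ≤
      (∑ i, (x i + y i)) ^ 2 / 2) :
    potKernel θ x y ≤ (∏ i, y i ^ (θ i / 2 - 1)) *
      (Gamma ((∑ i, θ i) / 2 - 1) / ∏ i, Gamma (θ i / 2)) *
        (∑ i, (x i + y i)) ^ (1 - (∑ i, θ i) / 2) := by
  have ha : 0 < (∑ i, θ i) / 2 - 1 := by linarith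
  set a := (∑ i, θ i) / 2 - 1
  set S := ∑ i, (x i + y i)
  have hs : ∀ i, 0 < θ i / 2 := fun i => half_pos (hθ i)
  set K := Gamma a / ∏ i, Gamma (θ i / 2)
  have hK : 0 ≤ K :=
    div_nonneg (Gamma_pos_of_pos ha).le (prod_nonneg fun i _ => (Gamma_pos_of_pos (hs i)).le)
  have hxy : ∀ i, 0 ≤ x i * y i := fun i => mul_nonneg (hx i) (hy i)
  have hratio : 4 * max a 1 ^ 2 * n ^ 2 * (∑ i, x i * y i / min (θ i / 2) 1) / S ^ 2 ≤ 1 / 2 := by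
    rw [div_le_iff₀ (by positivity)]
    linarith
  have hseries : ∑' m : ℕ, Gamma (a + 2 * m) * (S ^ (-(2 : ℝ) * m) / m !) *
      gammaMultinomialSum (fun i => θ i / 2) (fun i => x i * y i) m ≤ 2 * K := by
    refine tsum_le_two_mul_of_le_geometric (fun m => ?_) fun m => ?_
    · have := Gamma_pos_of_pos (by positivity : 0 < a + 2 * m)
      have := gammaMultinomialSum_nonneg hs hxy m
      positivity
    · refine (Gamma_mul_rpow_mul_gammaMultinomialSum_le ha hS hs hxy m).trans ?_
      have : 0 ≤ ∑ i, x i * y i / min (θ i / 2) 1 :=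
        sum_nonneg fun i _ => div_nonneg (hxy i) (le_min (hs i).le zero_le_one)
      gcongr
  have hP : 0 ≤ ∏ i, y i ^ (θ i / 2 - 1) := prod_nonneg fun i _ => rpow_nonneg (hy i) _
  calc potKernel θ x y = 1 / 2 * S ^ (1 - (∑ i, θ i) / 2) * (∏ i, y i ^ (θ i / 2 - 1)) *
        ∑' m : ℕ, Gamma (a + 2 * m) * (S ^ (-(2 : ℝ) * m) / m !) *
          gammaMultinomialSum (fun i => θ i / 2) (fun i => x i * y i) m := rfl
    _ ≤ 1 / 2 * S ^ (1 - (∑ i, θ i) / 2) * (∏ i, y i ^ (θ i / 2 - 1)) * (2 * K) := by gcongr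
    _ = (∏ i, y i ^ (θ i / 2 - 1)) * K * S ^ (1 - (∑ i, θ i) / 2) := by ring

/-- for fixed `y` the potential kernel decays like
`(∑ xᵢ)^{1−θ₀/2}`: there are constants `C > 0` and `M` such that
`u(x,y) ≤ C (∑ xᵢ)^{1−θ₀/2}` whenever `∑ xᵢ ≥ M`. -/
theorem stmt13 (n : ℕ) (θ : Fin n → ℝ) (hθ : ∀ i, 0 < θ i) (hθ0 : 2 < ∑ i, θ i)
    (y : Fin n → ℝ) (hy : ∀ i, 0 < y i) :
    ∃ C > (0 : ℝ), ∃ M : ℝ, ∀ x : Fin n → ℝ, (∀ i, 0 ≤ x i) →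
      M ≤ ∑ i, x i →
      potKernel θ x y ≤ C * (∑ i, x i) ^ ((1 : ℝ) - (∑ i, θ i) / 2) := by
  have hmin : ∀ i, 0 < min (θ i / 2) 1 := fun i => lt_min (half_pos (hθ i)) one_pos
  set Y := ∑ i, y i / min (θ i / 2) 1
  have hY : 0 ≤ Y := sum_nonneg fun i _ => div_nonneg (hy i).le (hmin i).le
  set B := 4 * max ((∑ i, θ i) / 2 - 1) 1 ^ 2 * n ^ 2
  have hP : 0 < ∏ i, y i ^ (θ i / 2 - 1) := prod_pos fun i _ => rpow_pos_of_pos (hy i) _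
  have hK : 0 < Gamma ((∑ i, θ i) / 2 - 1) / ∏ i, Gamma (θ i / 2) :=
    div_pos (Gamma_pos_of_pos (by linarith))
      (prod_pos fun i _ => Gamma_pos_of_pos (half_pos (hθ i)))
  refine ⟨_, mul_pos hP hK, 2 * B * Y + 1, fun x hx hM => ?_⟩
  have hxS : ∑ i, x i ≤ ∑ i, (x i + y i) :=
    sum_le_sum fun i _ => le_add_of_nonneg_right (hy i).le
  have hxsum : 0 < ∑ i, x i := lt_of_lt_of_le (by positivity) hM
  have hxy : ∑ i, x i * y i / min (θ i / 2) 1 ≤ (∑ i, (x i + y i)) * Y := by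
    simp_rw [mul_div_assoc]
    exact (sum_mul_le_sum_mul_sum _ (fun i _ => hx i) fun i _ =>
      div_nonneg (hy i).le (hmin i).le).trans (mul_le_mul_of_nonneg_right hxS hY)
  have hsmall : B * ∑ i, x i * y i / min (θ i / 2) 1 ≤ (∑ i, (x i + y i)) ^ 2 / 2 := by
    have : 0 ≤ B := by positivity
    nlinarith [mul_le_mul_of_nonneg_left hxy this]
  refine (potKernel_le hθ hθ0 hx (fun i => (hy i).le) (hxsum.trans_le hxS) hsmall).trans ?_
  exact mul_le_mul_of_nonneg_left (rpow_le_rpow_of_nonpos hxsum hxS (by linarith))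
    (mul_pos hP hK).le
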